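/- Let β be a mixed base with β_0 = 2 and m ≥ 2, and let N ≥ 1 be minimal with β_N ≥ 3 (assume such N exists, so that β_L = 2 for all 1 ≤ L < N). Let C = (c + β̂_{N+1}, (β_0 - c) mod β_0, 0, ..., 0) with 1 ≤ c ≤ β_0 - 1. Then for every X ∈ ℕ^m, σ_β(X + C) ≠ σ_β(X); i.e., C belongs to the maximum Sprague-Grundy system of σ_β but ord_β(Σ_i c^i) > min_i ord_β(c^i), so the maximum system strictly contains the canonical system 𝒞_β. -/

import Mathlib

open scoped BigOperators

/-- β̂_L = β_0 ⋯ β_{L-1}, the place value of digit L in mixed base β. -/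
def bhat (β : ℕ → ℕ) (L : ℕ) : ℕ := ∏ i ∈ Finset.range L, β i

/-- The L-th digit of n in the mixed base β. -/
def mdigit (β : ℕ → ℕ) (n L : ℕ) : ℕ := n / bhat β L % β L

/-- Digit-wise addition modulo β_L in mixed base β. -/
def moplus (β : ℕ → ℕ) (n h : ℕ) : ℕ :=
  ∑ L ∈ Finset.range (n + h + 1), ((mdigit β n L + mdigit β h L) % β L) * bhat β L

/-- Digit-wise subtraction modulo β_L in mixed base β. -/
def mominus (β : ℕ → ℕ) (n h : ℕ) : ℕ :=
  ∑ L ∈ Finset.range (n + h + 1), ((β L + mdigit β n L - mdigit β h L) % β L) * bhat β L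

/-- σ_β(X) = x^0 ⊕ ⋯ ⊕ x^{m-1}: the digit-wise Nim sum in mixed base β. -/
def msigma (β : ℕ → ℕ) {m : ℕ} (X : Fin m → ℕ) : ℕ :=
  ∑ L ∈ Finset.range (∑ i, X i + 1), ((∑ i, mdigit β (X i) L) % β L) * bhat β L

/-- Hamming weight: number of nonzero components. -/
def hamwt {m : ℕ} (C : Fin m → ℕ) : ℕ := (Finset.univ.filter (fun i => C i ≠ 0)).card

/-- ord_β(n): the largest L with β̂_L ∣ n (⊤ for n = 0). -/
def mord (β : ℕ → ℕ) (n : ℕ) : ℕ∞ :=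
  if n = 0 then ⊤ else (Nat.findGreatest (fun L => bhat β L ∣ n) n : ℕ∞)

/-- 𝒞 is a Sprague-Grundy system of σ_β: its members are nonzero moves and
σ_β satisfies the mex recursion of the take-away game Γ(ℕ^m, 𝒞), i.e. σ_β is the
Sprague-Grundy function of that game. -/
def IsSGSystem (β : ℕ → ℕ) {m : ℕ} (𝒞 : Set (Fin m → ℕ)) : Prop :=
  (∀ C ∈ 𝒞, C ≠ 0) ∧
  ∀ X : Fin m → ℕ, msigma β X =
    sInf {n : ℕ | ∀ C ∈ 𝒞, (∀ i, C i ≤ X i) → msigma β (fun i => X i - C i) ≠ n}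


section Helpers
variable (β : ℕ → ℕ)

lemma bhat_succ (L : ℕ) : bhat β (L + 1) = bhat β L * β L :=
  Finset.prod_range_succ β L

lemma bhat_zero : bhat β 0 = 1 := Finset.prod_range_zero β

variable (hβ : ∀ L, 2 ≤ β L)
include hβ

lemma bhat_pos (L : ℕ) : 0 < bhat β L := by
  induction L with
  | zero => simp [bhat]
  | succ n ih => rw [bhat_succ]; exact Nat.mul_pos ih (lt_of_lt_of_le two_pos (hβ n))

lemma two_pow_le_bhat (L : ℕ) : 2 ^ L ≤ bhat β L := by
  induction L with
  | zero => simp [bhat]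
  | succ n ih => rw [bhat_succ, pow_succ]; exact Nat.mul_le_mul ih (hβ n)

omit hβ in
lemma bhat_dvd {L M : ℕ} (h : L ≤ M) : bhat β L ∣ bhat β M := by
  unfold bhat
  exact Finset.prod_dvd_prod_of_subset _ _ _ (Finset.range_subset_range.2 h)

lemma mdigit_lt (n L : ℕ) : mdigit β n L < β L :=
  Nat.mod_lt _ (lt_of_lt_of_le two_pos (hβ L))

omit hβ in
lemma mdigit_eq_zero_of_lt {n L : ℕ} (h : n < bhat β L) : mdigit β n L = 0 := by
  unfold mdigit; rw [Nat.div_eq_of_lt h]; simp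

lemma mdigit_add_bhat (n M : ℕ) :
    mdigit β (n + bhat β M) M = (mdigit β n M + 1) % β M := by
  unfold mdigit
  rw [Nat.add_div_right _ (bhat_pos β hβ M), Nat.add_mod, Nat.mod_eq_of_lt (by have := hβ M; omega : (1:ℕ) < β M)]

lemma mdigit_add_bhat_low {L M : ℕ} (h : L < M) (n : ℕ) :
    mdigit β (n + bhat β M) L = mdigit β n L := by
  obtain ⟨t, ht⟩ := bhat_dvd β (show L + 1 ≤ M from h)
  rw [bhat_succ, mul_assoc] at ht
  unfold mdigit
  rw [ht, Nat.add_mul_div_left _ _ (bhat_pos β hβ L), Nat.add_mul_mod_self_left]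

lemma beta_dvd_bhat_div {L M : ℕ} (h : L < M) : β L ∣ bhat β M / bhat β L := by
  obtain ⟨t, ht⟩ := bhat_dvd β (show L + 1 ≤ M from h)
  rw [bhat_succ, mul_assoc] at ht
  rw [ht, Nat.mul_div_cancel_left _ (bhat_pos β hβ L)]
  exact Dvd.intro t rfl

end Helpers

section Helpers2
variable (β : ℕ → ℕ) (hβ : ∀ L, 2 ≤ β L)
include hβ

lemma mod_bhat_of_max (n : ℕ) : ∀ (j : ℕ), (∀ L < j, mdigit β n L = β L - 1) →
    n % bhat β j = bhat β j - 1 := by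
  intro j
  induction j with
  | zero => intro _; simp [bhat_zero, Nat.mod_one]
  | succ L ih =>
    intro h
    have h1 : n % bhat β L = bhat β L - 1 := ih (fun M hM => h M (hM.trans (Nat.lt_succ_self L)))
    have h2 : n / bhat β L % β L = β L - 1 := h L (Nat.lt_succ_self L)
    rw [bhat_succ, Nat.mod_mul, h1, h2]
    have hb := bhat_pos β hβ L
    have hβL := hβ L
    have hmul : bhat β L * (β L - 1) + bhat β L = bhat β L * β L := by
      rw [← Nat.mul_succ]; congr 1; omega
    omega

lemma succ_mdigit (n : ℕ) :
    ∃ j, (∀ L, L < j → mdigit β n L = β L - 1 ∧ mdigit β (n + 1) L = 0) ∧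
      (mdigit β n j + 1 < β j) ∧
      (mdigit β (n + 1) j = mdigit β n j + 1) ∧
      (∀ L, j < L → mdigit β (n + 1) L = mdigit β n L) := by
  classical
  have hex : ∃ L, mdigit β n L ≠ β L - 1 := by
    refine ⟨n + 1, ?_⟩
    have h0 : mdigit β n (n + 1) = 0 := by
      apply mdigit_eq_zero_of_lt β
      have h1 : n < 2 ^ (n + 1) := (Nat.lt_two_pow_self (n := n)).trans_le
        (Nat.pow_le_pow_right (by norm_num) n.le_succ)
      exact lt_of_lt_of_le h1 (two_pow_le_bhat β hβ (n + 1))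
    have := hβ (n + 1); omega
  set j := Nat.find hex with hj
  have hPj : mdigit β n j ≠ β j - 1 := Nat.find_spec hex
  have hmax : ∀ L < j, mdigit β n L = β L - 1 := by
    intro L hL
    have := Nat.find_min hex hL
    simpa using this
  have hdj : mdigit β n j + 1 < β j := by
    have h2 := mdigit_lt β hβ n j; omega
  -- q and the carry structure
  obtain ⟨q, hq⟩ : ∃ q, n = bhat β j * q + (bhat β j - 1) := by
    refine ⟨n / bhat β j, ?_⟩
    rw [← mod_bhat_of_max β hβ n j hmax]
    exact (Nat.div_add_mod n _).symm
  have hbj := bhat_pos β hβ j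
  have hnq : n / bhat β j = q := by
    rw [hq, Nat.mul_add_div hbj, Nat.div_eq_of_lt (by omega), add_zero]
  have hsucc : n + 1 = (q + 1) * bhat β j := by
    have : (q + 1) * bhat β j = bhat β j * q + bhat β j := by ring
    omega
  have hqmod : q % β j = mdigit β n j := by
    unfold mdigit; rw [hnq]
  refine ⟨j, ?_, hdj, ?_, ?_⟩
  · intro L hL
    refine ⟨hmax L hL, ?_⟩
    obtain ⟨t, ht⟩ := bhat_dvd β (show L + 1 ≤ j from hL)
    rw [bhat_succ] at ht
    have hbL := bhat_pos β hβ L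
    unfold mdigit
    rw [hsucc, ht, show (q + 1) * (bhat β L * β L * t) = ((q + 1) * t) * β L * bhat β L by ring,
      Nat.mul_div_cancel _ hbL, Nat.mul_mod_left]
  · unfold mdigit
    rw [hsucc, Nat.mul_div_cancel _ hbj, hnq, Nat.add_mod,
      Nat.mod_eq_of_lt (show (1:ℕ) < β j by have := hβ j; omega)]
    rw [hqmod]
    exact Nat.mod_eq_of_lt hdj
  · intro L hL
    obtain ⟨D, hD⟩ := bhat_dvd β (show j + 1 ≤ L from hL)
    rw [bhat_succ] at hD
    have hβj := hβ j
    have hq1 : (q + 1) / β j = q / β j := by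
      have h := Nat.div_add_mod q (β j)
      have h2 : q + 1 = (q % β j + 1) + β j * (q / β j) := by omega
      rw [h2, Nat.add_mul_div_left _ _ (by omega : 0 < β j),
        Nat.div_eq_of_lt (by omega), zero_add]
    have hdiv1 : (n + 1) / bhat β L = q / (β j * D) := by
      rw [hsucc, hD, mul_assoc, mul_comm (q+1) (bhat β j),
        Nat.mul_div_mul_left _ _ hbj, ← Nat.div_div_eq_div_mul, hq1, Nat.div_div_eq_div_mul]
    have hdiv2 : n / bhat β L = q / (β j * D) := by
      rw [hD, mul_assoc, ← Nat.div_div_eq_div_mul, hnq]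
    unfold mdigit
    rw [hdiv1, hdiv2]

end Helpers2


section Helpers3
variable (β : ℕ → ℕ) (hβ : ∀ L, 2 ≤ β L)
include hβ

lemma sum_digits_lt (d : ℕ → ℕ) (hd : ∀ L, d L < β L) (K : ℕ) :
    ∑ L ∈ Finset.range K, d L * bhat β L < bhat β K := by
  induction K with
  | zero => simp [bhat_zero]
  | succ K ih =>
    rw [Finset.sum_range_succ, bhat_succ]
    have h1 := hd K
    have h2 := bhat_pos β hβ K
    have h3 : (d K + 1) * bhat β K ≤ β K * bhat β K := Nat.mul_le_mul_right _ (by omega)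
    have h4 : (d K + 1) * bhat β K = d K * bhat β K + bhat β K := by ring
    have h5 : β K * bhat β K = bhat β K * β K := by ring
    omega

lemma digit_of_sum (d : ℕ → ℕ) (hd : ∀ L, d L < β L) {K L0 : ℕ} (h : L0 < K) :
    mdigit β (∑ L ∈ Finset.range K, d L * bhat β L) L0 = d L0 := by
  have hb0 := bhat_pos β hβ L0
  have hsplit := Finset.sum_range_add_sum_Ico (fun L => d L * bhat β L) (le_of_lt h)
  have hlow := sum_digits_lt β hβ d hd L0
  have hM : ∑ L ∈ Finset.Ico L0 K, d L * bhat β L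
      = bhat β L0 * ∑ L ∈ Finset.Ico L0 K, d L * (bhat β L / bhat β L0) := by
    rw [Finset.mul_sum]
    refine Finset.sum_congr rfl (fun L hL => ?_)
    obtain ⟨t, ht⟩ := bhat_dvd β (Finset.mem_Ico.mp hL).1
    rw [ht, Nat.mul_div_cancel_left _ hb0]; ring
  have hdiv : (∑ L ∈ Finset.range K, d L * bhat β L) / bhat β L0
      = ∑ L ∈ Finset.Ico L0 K, d L * (bhat β L / bhat β L0) := by
    rw [← hsplit, hM, Nat.add_mul_div_left _ _ hb0, Nat.div_eq_of_lt hlow, zero_add]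
  unfold mdigit
  rw [hdiv, Finset.sum_eq_sum_Ico_succ_bot h, Nat.div_self hb0, mul_one]
  have hdvd : β L0 ∣ ∑ L ∈ Finset.Ico (L0 + 1) K, d L * (bhat β L / bhat β L0) := by
    refine Finset.dvd_sum (fun L hL => ?_)
    exact Dvd.dvd.mul_left (beta_dvd_bhat_div β hβ (Finset.mem_Ico.mp hL).1) _
  obtain ⟨R, hR⟩ := hdvd
  rw [hR, Nat.add_mul_mod_self_left, Nat.mod_eq_of_lt (hd L0)]

lemma msigma_eq_sum {m : ℕ} (X : Fin m → ℕ) {K : ℕ} (hK : ∑ i, X i + 1 ≤ K) :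
    msigma β X = ∑ L ∈ Finset.range K, ((∑ i, mdigit β (X i) L) % β L) * bhat β L := by
  unfold msigma
  apply Finset.sum_subset (Finset.range_subset_range.2 hK)
  intro L _ hL
  simp only [Finset.mem_range, not_lt] at hL
  have hz : ∀ i, mdigit β (X i) L = 0 := by
    intro i
    apply mdigit_eq_zero_of_lt β
    have h1 : X i ≤ ∑ j, X j := Finset.single_le_sum (f := X) (fun _ _ => Nat.zero_le _)
      (Finset.mem_univ i)
    have h2 : L < 2 ^ L := Nat.lt_two_pow_self (n := L)
    have h3 := two_pow_le_bhat β hβ L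
    omega
  simp [hz]

lemma msigma_ne {m : ℕ} (X Y : Fin m → ℕ) (L0 : ℕ)
    (h : (∑ i, mdigit β (Y i) L0) % β L0 ≠ (∑ i, mdigit β (X i) L0) % β L0) :
    msigma β Y ≠ msigma β X := by
  intro he
  set K := max (max (∑ i, X i + 1) (∑ i, Y i + 1)) (L0 + 1) with hK
  have hKX : ∑ i, X i + 1 ≤ K := le_trans (le_max_left _ _) (le_max_left _ _)
  have hKY : ∑ i, Y i + 1 ≤ K := le_trans (le_max_right _ _) (le_max_left _ _)
  have hKL : L0 < K := lt_of_lt_of_le (Nat.lt_succ_self L0) (le_max_right _ _)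
  rw [msigma_eq_sum β hβ X hKX, msigma_eq_sum β hβ Y hKY] at he
  have hx := digit_of_sum β hβ (fun L => (∑ i, mdigit β (X i) L) % β L)
    (fun L => Nat.mod_lt _ (lt_of_lt_of_le two_pos (hβ L))) hKL
  have hy := digit_of_sum β hβ (fun L => (∑ i, mdigit β (Y i) L) % β L)
    (fun L => Nat.mod_lt _ (lt_of_lt_of_le two_pos (hβ L))) hKL
  beta_reduce at hx hy
  exact h (by rw [← hy, he, hx])

omit hβ in
lemma mod_shift_ne {b u v u' v' R k s : ℕ} (hk : 0 < k) (hkb : k < b)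
    (heq : u + v + k = u' + v' + b * s) :
    (u' + (v' + R)) % b ≠ (u + (v + R)) % b := by
  intro h
  have h2 : (u' + (v' + R)) % b = (u + (v + R) + k) % b := by
    rw [show u + (v + R) + k = (u' + (v' + R)) + b * s by omega, Nat.add_mul_mod_self_left]
  have h3 : u + (v + R) ≡ u + (v + R) + k [MOD b] := by
    unfold Nat.ModEq; omega
  have h4 := (Nat.modEq_iff_dvd' (Nat.le_add_right _ _)).mp h3
  simp only [Nat.add_sub_cancel_left] at h4
  have := Nat.le_of_dvd hk h4
  omega

end Helpers3

section Key
variable (β : ℕ → ℕ) (hβ : ∀ L, 2 ≤ β L)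
include hβ

lemma key_level (N : ℕ) (hN : 1 ≤ N) (hβN : 3 ≤ β N) (a b : ℕ) :
    ∃ L k s, 0 < k ∧ k < β L ∧
      mdigit β a L + mdigit β b L + k
        = mdigit β (a + 1 + bhat β (N + 1)) L + mdigit β (b + 1) L + β L * s := by
  obtain ⟨ja, hAmax, hAd, hAs, hAh⟩ := succ_mdigit β hβ a
  obtain ⟨jb, hBmax, hBd, hBs, hBh⟩ := succ_mdigit β hβ b
  have hab : ∀ L, L ≤ N → mdigit β (a + 1 + bhat β (N + 1)) L = mdigit β (a + 1) L :=
    fun L hL => mdigit_add_bhat_low β hβ (by omega) _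
  rcases lt_trichotomy (min ja N) (min jb N) with hlt | heq | hgt
  · have hjaN : ja < N := by omega
    have hLN : ja + 1 ≤ N := hjaN
    have hLjb : ja + 1 ≤ jb := by omega
    have hu : mdigit β (a + 1 + bhat β (N + 1)) (ja + 1) = mdigit β a (ja + 1) := by
      rw [hab _ hLN, hAh _ (Nat.lt_succ_self ja)]
    rcases lt_or_eq_of_le hLjb with hcase | hcase
    · obtain ⟨hv1, hv2⟩ := hBmax _ hcase
      refine ⟨ja + 1, 1, 1, one_pos, by have := hβ (ja + 1); omega, ?_⟩
      rw [hu, hv1, hv2]; have := hβ (ja + 1); omega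
    · refine ⟨ja + 1, 1, 0, one_pos, by have := hβ (ja + 1); omega, ?_⟩
      rw [hu, hcase, hBs]; omega
  · by_cases hjN : ja < N
    · -- ja = jb < N, work at level N+1
      have hjb : jb = ja := by omega
      have hu1 : mdigit β (a + 1) (N + 1) = mdigit β a (N + 1) := hAh _ (by omega)
      have hv : mdigit β (b + 1) (N + 1) = mdigit β b (N + 1) := hBh _ (by omega)
      have hu2 : mdigit β (a + 1 + bhat β (N + 1)) (N + 1)
          = (mdigit β (a + 1) (N + 1) + 1) % β (N + 1) := mdigit_add_bhat β hβ _ _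
      have hlt := mdigit_lt β hβ a (N + 1)
      have hb2 := hβ (N + 1)
      by_cases hw : mdigit β a (N + 1) + 1 < β (N + 1)
      · refine ⟨N + 1, 1, 0, one_pos, by omega, ?_⟩
        rw [hu2, hu1, Nat.mod_eq_of_lt hw, hv]; omega
      · refine ⟨N + 1, 1, 1, one_pos, by omega, ?_⟩
        have hq : mdigit β a (N + 1) + 1 = β (N + 1) := by omega
        rw [hu2, hu1, hq, Nat.mod_self, hv]; omega
    · -- ja ≥ N and jb ≥ N, work at level N
      have hja : N ≤ ja := by omega
      have hjb : N ≤ jb := by omega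
      have hu0 : mdigit β (a + 1 + bhat β (N + 1)) N = mdigit β (a + 1) N := hab N le_rfl
      have ha' : ∃ sa, mdigit β a N + 1 = mdigit β (a + 1) N + β N * sa := by
        rcases eq_or_lt_of_le hja with h | h
        · refine ⟨0, ?_⟩; rw [← h] at hAs; rw [hAs]; omega
        · obtain ⟨h1, h2⟩ := hAmax N h
          refine ⟨1, ?_⟩; rw [h1, h2]; have := hβ N; omega
      have hb' : ∃ sb, mdigit β b N + 1 = mdigit β (b + 1) N + β N * sb := by
        rcases eq_or_lt_of_le hjb with h | h
        · refine ⟨0, ?_⟩; rw [← h] at hBs; rw [hBs]; omega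
        · obtain ⟨h1, h2⟩ := hBmax N h
          refine ⟨1, ?_⟩; rw [h1, h2]; have := hβ N; omega
      obtain ⟨sa, hsa⟩ := ha'
      obtain ⟨sb, hsb⟩ := hb'
      refine ⟨N, 2, sa + sb, two_pos, by omega, ?_⟩
      rw [hu0]
      have hdist : β N * (sa + sb) = β N * sa + β N * sb := by ring
      omega
  · have hjbN : jb < N := by omega
    have hLN : jb + 1 ≤ N := hjbN
    have hLja : jb + 1 ≤ ja := by omega
    have hv : mdigit β (b + 1) (jb + 1) = mdigit β b (jb + 1) := hBh _ (Nat.lt_succ_self jb)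
    have hu0 : mdigit β (a + 1 + bhat β (N + 1)) (jb + 1) = mdigit β (a + 1) (jb + 1) :=
      hab _ hLN
    rcases lt_or_eq_of_le hLja with hcase | hcase
    · obtain ⟨hu1, hu2⟩ := hAmax _ hcase
      refine ⟨jb + 1, 1, 1, one_pos, by have := hβ (jb + 1); omega, ?_⟩
      rw [hu0, hu1, hu2, hv]; have := hβ (jb + 1); omega
    · refine ⟨jb + 1, 1, 0, one_pos, by have := hβ (jb + 1); omega, ?_⟩
      rw [hu0, hv, hcase, hAs]; omega

end Key

/-- With β₀ = 2, β_L = 2 for 1 ≤ L < N and β_N ≥ 3, the move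
C = (c + β̂_{N+1}, (β₀ - c) mod β₀, 0, …, 0) always changes σ_β, yet
ord_β(Σ c^i) > min_i ord_β(c^i); hence the maximum system strictly contains 𝒞_β. -/
theorem stmt12 (β : ℕ → ℕ) (hβ : ∀ L, 2 ≤ β L) (hβ0 : β 0 = 2)
    (N : ℕ) (hN : 1 ≤ N) (hβN : 3 ≤ β N) (hβL : ∀ L, 1 ≤ L → L < N → β L = 2)
    {m : ℕ} (hm : 2 ≤ m) (c : ℕ) (hc1 : 1 ≤ c) (hc2 : c ≤ β 0 - 1)
    (C : Fin m → ℕ)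
    (hC : C = fun i : Fin m => if (i : ℕ) = 0 then c + bhat β (N + 1)
      else if (i : ℕ) = 1 then (β 0 - c) % β 0 else 0) :
    (∀ X : Fin m → ℕ, msigma β (fun i => X i + C i) ≠ msigma β X) ∧
      (⨅ i, mord β (C i)) < mord β (∑ i, C i) := by
  have hc : c = 1 := by rw [hβ0] at hc2; omega
  subst hc
  obtain ⟨m', rfl⟩ : ∃ m', m = m' + 2 := ⟨m - 2, by omega⟩
  have hC0 : C 0 = 1 + bhat β (N + 1) := by
    rw [hC]; simp
  have hC1 : C 1 = 1 := by
    rw [hC]; simp [hβ0]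
  have hCi : ∀ i : Fin m', C i.succ.succ = 0 := by
    intro i
    rw [hC]
    simp [Fin.val_succ]
  constructor
  · intro X
    obtain ⟨L, k, s, hk, hkβ, heq⟩ := key_level β hβ N hN hβN (X 0) (X 1)
    apply msigma_ne β hβ
    simp only [Fin.sum_univ_succ, Fin.succ_zero_eq_one]
    have he0 : X 0 + C 0 = X 0 + 1 + bhat β (N + 1) := by rw [hC0]; omega
    have he1 : X 1 + C 1 = X 1 + 1 := by rw [hC1]
    have hei : ∀ i : Fin m', X i.succ.succ + C i.succ.succ = X i.succ.succ := by
      intro i; rw [hCi]; omega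
    simp only [he0, he1, hei]
    exact mod_shift_ne hk hkβ heq
  · have hB2 : (2 : ℕ) ∣ bhat β (N + 1) := by
      have h1 : bhat β 1 ∣ bhat β (N + 1) := bhat_dvd β (by omega)
      have h2 : bhat β 1 = 2 := by
        rw [show (1:ℕ) = 0 + 1 from rfl, bhat_succ, bhat_zero, one_mul, hβ0]
      rwa [h2] at h1
    have hb1 : bhat β 1 = 2 := by
      rw [show (1:ℕ) = 0 + 1 from rfl, bhat_succ, bhat_zero, one_mul, hβ0]
    have hsum : ∑ i, C i = bhat β (N + 1) + 2 := by
      rw [Fin.sum_univ_succ, Fin.sum_univ_succ, Fin.succ_zero_eq_one, hC0, hC1]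
      simp only [hCi]
      simp
      omega
    have hmordC0 : mord β (C 0) = 0 := by
      rw [hC0]
      unfold mord
      rw [if_neg (by omega : 1 + bhat β (N + 1) ≠ 0)]
      have hfg : Nat.findGreatest (fun L => bhat β L ∣ 1 + bhat β (N + 1))
          (1 + bhat β (N + 1)) = 0 := by
        rw [Nat.findGreatest_eq_zero_iff]
        intro k hk _ hdvd
        have h1 : bhat β 1 ∣ 1 + bhat β (N + 1) := dvd_trans (bhat_dvd β hk) hdvd
        rw [hb1] at h1
        omega
      rw [hfg]; rfl
    have h1 : (⨅ i, mord β (C i)) ≤ 0 := by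
      have := iInf_le (fun i => mord β (C i)) (0 : Fin (m' + 2))
      rwa [hmordC0] at this
    have h2 : (0 : ℕ∞) < mord β (∑ i, C i) := by
      rw [hsum]
      unfold mord
      rw [if_neg (by omega : bhat β (N + 1) + 2 ≠ 0)]
      have hge : 1 ≤ Nat.findGreatest (fun L => bhat β L ∣ bhat β (N + 1) + 2)
          (bhat β (N + 1) + 2) :=
        Nat.le_findGreatest (by omega) (by rw [hb1]; omega)
      exact_mod_cast lt_of_lt_of_le zero_lt_one (by exact_mod_cast hge)
    exact lt_of_le_of_lt h1 h2
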